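/- (Robustness of TD(λ) limits to cost manipulation.) Let P ∈ ℝ^{n×n} be row-stochastic with stationary distribution π, D = diag(π), α ∈ (0,1), λ ∈ [0,1), and let Φ ∈ ℝ^{n×K} have linearly independent columns. Define M := (1−λ) Σ_{m=0}^∞ λ^m α^{m+1} P^{m+1}, A := Φᵀ D (M − I) Φ, and for a cost vector c ∈ ℝ^n define b(c) := Φᵀ D Σ_{m=0}^∞ (αλ)^m P^m c. Let ḡ, g̃ ∈ ℝ^n be the true and manipulated cost vectors, η := g̃ − ḡ, and suppose r*, r̃* ∈ ℝ^K satisfy A r* + b(ḡ) = 0 and A r̃* + b(g̃) = 0. Then ‖Φ r̃* − Φ r*‖_D ≤ (1/(1−α)) · ‖η‖_D. -/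

import Mathlib

/-!
Put `z = Φ (r̃* - r*)` and `N = ∑ (αλ)^m P^m`. Subtracting the two fixed-point equations gives the
Galerkin condition `Φᵀ D (M z + N η - z) = 0`, so `z` is `D`-orthogonal to `M z + N η - z` and
Pythagoras yields `‖z‖_D ≤ ‖M z‖_D + ‖N η‖_D`. Since `π` is stationary, Jensen's inequality makes
every power of `P` a contraction for `‖·‖_D`; summing the series, `‖M z‖_D ≤ (1-λ)α/(1-αλ) ‖z‖_D`
and `‖N η‖_D ≤ ‖η‖_D/(1-αλ)`. As `1 - αλ - (1-λ)α = 1 - α`, this rearranges to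
`(1 - α) ‖z‖_D ≤ ‖η‖_D`.
-/

open Matrix

/-- The weighted quadratic norm `‖J‖_D = √(∑ i, π i · J i²)` associated with a weight
vector `π`. -/
noncomputable def normD {n : ℕ} (pi : Fin n → ℝ) (J : Fin n → ℝ) : ℝ :=
  Real.sqrt (∑ i, pi i * (J i) ^ 2)

theorem HasSum.matrix_mulVec {ι m n R : Type*} [Fintype n] [CommSemiring R] [TopologicalSpace R]
    [IsTopologicalSemiring R] {S : ι → Matrix m n R} {a : Matrix m n R} (h : HasSum S a)
    (v : n → R) : HasSum (fun i => S i *ᵥ v) (a *ᵥ v) :=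
  h.map ((mulVecBilin R R).flip v) (continuous_id.matrix_mulVec continuous_const)

section RowStochastic

variable {ι : Type*} [Fintype ι] [DecidableEq ι] {P : Matrix ι ι ℝ}

theorem sq_mulVec_le_mulVec_sq (hP : P ∈ rowStochastic ℝ ι) (v : ι → ℝ) :
    (P *ᵥ v) ^ 2 ≤ P *ᵥ v ^ 2 := fun i => by
  simpa [mulVec, dotProduct, smul_eq_mul] using
    (even_two.convexOn_pow (𝕜 := ℝ)).map_sum_le (t := Finset.univ) (w := P i) (p := v)
      (fun j _ => nonneg_of_mem_rowStochastic hP) (sum_row_of_mem_rowStochastic hP i)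
      (fun j _ => Set.mem_univ _)

theorem summable_smul_pow_of_mem_rowStochastic (hP : P ∈ rowStochastic ℝ ι) {c : ℕ → ℝ}
    (hc : Summable c) (e : ℕ → ℕ) : Summable fun m => c m • P ^ e m := by
  refine Pi.summable.2 fun i => Pi.summable.2 fun j => hc.abs.of_norm_bounded fun m => ?_
  have hPm := pow_mem hP (e m)
  rw [Matrix.smul_apply, smul_eq_mul, Real.norm_eq_abs, abs_mul,
    abs_of_nonneg (nonneg_of_mem_rowStochastic hPm)]
  exact mul_le_of_le_one_right (abs_nonneg _) (le_one_of_mem_rowStochastic hPm)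

end RowStochastic

section WeightedNorm

variable {n : ℕ} {pi : Fin n → ℝ}

noncomputable def weightedEmbedding (pi : Fin n → ℝ) :
    (Fin n → ℝ) →L[ℝ] EuclideanSpace ℝ (Fin n) :=
  LinearMap.toContinuousLinearMap
    ((EuclideanSpace.equiv (Fin n) ℝ).symm.toLinearMap ∘ₗ (diagonal fun i => √(pi i)).mulVecLin)

@[simp]
theorem weightedEmbedding_apply (v : Fin n → ℝ) (i : Fin n) :
    weightedEmbedding pi v i = √(pi i) * v i := by
  simp [weightedEmbedding, mulVec_diagonal]

theorem inner_weightedEmbedding (hpi : ∀ i, 0 ≤ pi i) (u v : Fin n → ℝ) :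
    inner ℝ (weightedEmbedding pi u) (weightedEmbedding pi v) = u ⬝ᵥ (diagonal pi *ᵥ v) := by
  simp only [PiLp.inner_apply, weightedEmbedding_apply, mulVec_diagonal, dotProduct,
    RCLike.inner_apply, conj_trivial]
  refine Finset.sum_congr rfl fun i _ => ?_
  linear_combination (u i * v i) * Real.mul_self_sqrt (hpi i)

theorem normD_eq_norm_weightedEmbedding (hpi : ∀ i, 0 ≤ pi i) (v : Fin n → ℝ) :
    normD pi v = ‖weightedEmbedding pi v‖ := by
  rw [norm_eq_sqrt_real_inner, inner_weightedEmbedding hpi, normD]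
  simp only [mulVec_diagonal, dotProduct]
  congr 1
  exact Finset.sum_congr rfl fun i _ => by ring

theorem normD_add_le (hpi : ∀ i, 0 ≤ pi i) (u v : Fin n → ℝ) :
    normD pi (u + v) ≤ normD pi u + normD pi v := by
  simp only [normD_eq_norm_weightedEmbedding hpi, map_add]
  exact norm_add_le _ _

theorem normD_smul (hpi : ∀ i, 0 ≤ pi i) (c : ℝ) (v : Fin n → ℝ) :
    normD pi (c • v) = |c| * normD pi v := by
  simp only [normD_eq_norm_weightedEmbedding hpi, map_smul, norm_smul, Real.norm_eq_abs]

theorem normD_le_of_orthogonal (hpi : ∀ i, 0 ≤ pi i) {z y : Fin n → ℝ}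
    (h : z ⬝ᵥ (diagonal pi *ᵥ (y - z)) = 0) : normD pi z ≤ normD pi y := by
  rw [← inner_weightedEmbedding hpi, map_sub] at h
  have hpyth := norm_add_sq_eq_norm_sq_add_norm_sq_real h
  rw [add_sub_cancel] at hpyth
  rw [normD_eq_norm_weightedEmbedding hpi, normD_eq_norm_weightedEmbedding hpi,
    mul_self_le_mul_self_iff (norm_nonneg _) (norm_nonneg _), hpyth]
  exact le_add_of_nonneg_right (mul_self_nonneg _)

variable {P : Matrix (Fin n) (Fin n) ℝ}

theorem normD_mulVec_le (hP : P ∈ rowStochastic ℝ (Fin n)) (hpi : ∀ i, 0 ≤ pi i)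
    (hstat : pi ᵥ* P = pi) (v : Fin n → ℝ) : normD pi (P *ᵥ v) ≤ normD pi v := by
  apply Real.sqrt_le_sqrt
  calc ∑ i, pi i * (P *ᵥ v) i ^ 2 = pi ⬝ᵥ (P *ᵥ v) ^ 2 := rfl
    _ ≤ pi ⬝ᵥ (P *ᵥ v ^ 2) := dotProduct_le_dotProduct_of_nonneg_left
        (sq_mulVec_le_mulVec_sq hP v) hpi
    _ = ∑ i, pi i * v i ^ 2 := by rw [dotProduct_mulVec, hstat]; rfl

theorem normD_pow_mulVec_le (hP : P ∈ rowStochastic ℝ (Fin n)) (hpi : ∀ i, 0 ≤ pi i)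
    (hstat : pi ᵥ* P = pi) (m : ℕ) (v : Fin n → ℝ) : normD pi ((P ^ m) *ᵥ v) ≤ normD pi v := by
  induction m with
  | zero => rw [pow_zero, one_mulVec]
  | succ m ih =>
    rw [pow_succ', ← mulVec_mulVec]
    exact (normD_mulVec_le hP hpi hstat _).trans ih

theorem normD_tsum_smul_pow_mulVec_le (hP : P ∈ rowStochastic ℝ (Fin n)) (hpi : ∀ i, 0 ≤ pi i)
    (hstat : pi ᵥ* P = pi) {c : ℕ → ℝ} (hc : Summable c) (e : ℕ → ℕ) (v : Fin n → ℝ) :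
    normD pi ((∑' m, c m • P ^ e m) *ᵥ v) ≤ (∑' m, |c m|) * normD pi v := by
  have hsum := ((summable_smul_pow_of_mem_rowStochastic hP hc e).hasSum.matrix_mulVec v).map
    (weightedEmbedding pi) (weightedEmbedding pi).continuous
  rw [normD_eq_norm_weightedEmbedding hpi]
  refine hsum.norm_le_of_bounded (hc.abs.hasSum.mul_right _) fun m => ?_
  simp only [Function.comp_apply, smul_mulVec, map_smul, norm_smul, Real.norm_eq_abs,
    ← normD_eq_norm_weightedEmbedding hpi]
  exact mul_le_mul_of_nonneg_left (normD_pow_mulVec_le hP hpi hstat _ v) (abs_nonneg _)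

theorem normD_tsum_geometric_smul_pow_mulVec_le (hP : P ∈ rowStochastic ℝ (Fin n))
    (hpi : ∀ i, 0 ≤ pi i) (hstat : pi ᵥ* P = pi) {q : ℝ} (hq0 : 0 ≤ q) (hq1 : q < 1)
    (v : Fin n → ℝ) : normD pi ((∑' m : ℕ, q ^ m • P ^ m) *ᵥ v) ≤ (1 - q)⁻¹ * normD pi v := by
  have hgeo := hasSum_geometric_of_lt_one hq0 hq1
  have hsum : ∑' m : ℕ, |q ^ m| = (1 - q)⁻¹ := by
    rw [tsum_congr fun m => abs_of_nonneg (pow_nonneg hq0 m), hgeo.tsum_eq]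
  exact hsum ▸ normD_tsum_smul_pow_mulVec_le hP hpi hstat hgeo.summable _ v

theorem normD_lambda_return_mulVec_le (hP : P ∈ rowStochastic ℝ (Fin n))
    (hpi : ∀ i, 0 ≤ pi i) (hstat : pi ᵥ* P = pi) {α lam : ℝ} (hα0 : 0 ≤ α) (hlam0 : 0 ≤ lam)
    (hlam1 : lam ≤ 1) (hq1 : α * lam < 1) (v : Fin n → ℝ) :
    normD pi (((1 - lam) • ∑' m : ℕ, (lam ^ m * α ^ (m + 1)) • P ^ (m + 1)) *ᵥ v) ≤
      (1 - lam) * (α * (1 - α * lam)⁻¹) * normD pi v := by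
  have hgeo := (hasSum_geometric_of_lt_one (mul_nonneg hα0 hlam0) hq1).mul_left α
  have hc : (fun m : ℕ => lam ^ m * α ^ (m + 1)) = fun m => α * (α * lam) ^ m := by
    ext m; ring
  have hsum : ∑' m : ℕ, |lam ^ m * α ^ (m + 1)| = α * (1 - α * lam)⁻¹ := by
    rw [tsum_congr fun m => abs_of_nonneg (by positivity), hc, hgeo.tsum_eq]
  rw [smul_mulVec, normD_smul hpi, abs_of_nonneg (by linarith), mul_assoc, ← hsum]
  exact mul_le_mul_of_nonneg_left
    (normD_tsum_smul_pow_mulVec_le hP hpi hstat (hc ▸ hgeo.summable) _ v) (by linarith)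

end WeightedNorm

theorem galerkin_orthogonality {ι κ : Type*} [Fintype ι] [Fintype κ] [DecidableEq ι]
    {Φ : Matrix ι κ ℝ} {D M N : Matrix ι ι ℝ} {r r' : κ → ℝ} {g g' : ι → ℝ}
    (hr : (Φᵀ * D * (M - 1) * Φ) *ᵥ r + (Φᵀ * D * N) *ᵥ g = 0)
    (hr' : (Φᵀ * D * (M - 1) * Φ) *ᵥ r' + (Φᵀ * D * N) *ᵥ g' = 0) :
    (Φ *ᵥ (r' - r)) ⬝ᵥ (D *ᵥ (M *ᵥ (Φ *ᵥ (r' - r)) + N *ᵥ (g' - g) - Φ *ᵥ (r' - r))) = 0 := by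
  have hres : Φᵀ *ᵥ (D *ᵥ (M *ᵥ (Φ *ᵥ (r' - r)) + N *ᵥ (g' - g) - Φ *ᵥ (r' - r))) = 0 := by
    rw [← sub_eq_zero.2 (hr'.trans hr.symm)]
    simp only [← mulVec_mulVec, sub_mulVec, one_mulVec, mulVec_add, mulVec_sub]
    abel
  have h := congrArg ((r' - r) ⬝ᵥ ·) hres
  rwa [dotProduct_mulVec _ Φᵀ, vecMul_transpose, dotProduct_zero] at h

theorem TD_limit_robustness_general
    {n K : ℕ} (P : Matrix (Fin n) (Fin n) ℝ)
    (hP0 : ∀ i j, 0 ≤ P i j) (hP1 : ∀ i, ∑ j, P i j = 1)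
    (pi : Fin n → ℝ) (hpi0 : ∀ i, 0 < pi i)
    (hstat : ∀ j, ∑ i, pi i * P i j = pi j)
    (α lam : ℝ) (hα0 : 0 < α) (hα1 : α < 1) (hlam0 : 0 ≤ lam) (hlam1 : lam < 1)
    (Φ : Matrix (Fin n) (Fin K) ℝ)
    (D : Matrix (Fin n) (Fin n) ℝ) (hD : D = Matrix.diagonal pi)
    (M : Matrix (Fin n) (Fin n) ℝ)
    (hM : M = (1 - lam) • ∑' m : ℕ, (lam ^ m * α ^ (m + 1)) • P ^ (m + 1))
    (A : Matrix (Fin K) (Fin K) ℝ) (hA : A = Φᵀ * D * (M - 1) * Φ)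
    (b : (Fin n → ℝ) → (Fin K → ℝ))
    (hb : ∀ c, b c = (Φᵀ * D * ∑' m : ℕ, (α * lam) ^ m • P ^ m).mulVec c)
    (gbar gt η : Fin n → ℝ) (hη : η = gt - gbar)
    (rstar rtstar : Fin K → ℝ)
    (hrstar : A.mulVec rstar + b gbar = 0)
    (hrtstar : A.mulVec rtstar + b gt = 0) :
    normD pi (Φ.mulVec rtstar - Φ.mulVec rstar) ≤ (1 / (1 - α)) * normD pi η := by
  have hpi : ∀ i, 0 ≤ pi i := fun i => (hpi0 i).le
  have hP : P ∈ rowStochastic ℝ (Fin n) := mem_rowStochastic_iff_sum.2 ⟨hP0, hP1⟩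
  have hπP : pi ᵥ* P = pi := funext hstat
  have hq1 : α * lam < 1 := by nlinarith
  rw [hA, hb] at hrstar hrtstar
  have horth := galerkin_orthogonality hrstar hrtstar
  rw [← hη, hD] at horth
  rw [← mulVec_sub]
  set z := Φ *ᵥ (rtstar - rstar)
  have hMz := normD_lambda_return_mulVec_le hP hpi hπP hα0.le hlam0 hlam1.le hq1 z
  have hNη := normD_tsum_geometric_smul_pow_mulVec_le hP hpi hπP (by positivity) hq1 η
  rw [← hM] at hMz
  have hZ := (normD_le_of_orthogonal hpi horth).trans (normD_add_le hpi _ _)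
  have h1q : 0 < 1 - α * lam := by linarith
  have hkey : (1 - α * lam) * normD pi z ≤ (1 - lam) * α * normD pi z + normD pi η := by
    calc _ ≤ (1 - α * lam) * ((1 - lam) * (α * (1 - α * lam)⁻¹) * normD pi z +
            (1 - α * lam)⁻¹ * normD pi η) :=
          mul_le_mul_of_nonneg_left (hZ.trans (add_le_add hMz hNη)) h1q.le
      _ = _ := by field_simp
  rw [one_div, inv_mul_eq_div, le_div_iff₀ (by linarith)]
  linear_combination hkey

/-- Robustness of TD(λ) limits to cost manipulation: with
`M = (1−λ)∑ λ^m α^{m+1} P^{m+1}`, `A = Φᵀ D (M − I) Φ`, `b(c) = Φᵀ D ∑ (αλ)^m P^m c`, if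
`A r* + b(ḡ) = 0` and `A r̃* + b(g̃) = 0`, then with `η = g̃ − ḡ` we have
`‖Φ r̃* − Φ r*‖_D ≤ (1/(1−α)) ‖η‖_D`. -/
theorem TD_limit_robustness
    {n K : ℕ} (P : Matrix (Fin n) (Fin n) ℝ)
    (hP0 : ∀ i j, 0 ≤ P i j) (hP1 : ∀ i, ∑ j, P i j = 1)
    (pi : Fin n → ℝ) (hpi0 : ∀ i, 0 < pi i) (hpi1 : ∑ i, pi i = 1)
    (hstat : ∀ j, ∑ i, pi i * P i j = pi j)
    (α lam : ℝ) (hα0 : 0 < α) (hα1 : α < 1) (hlam0 : 0 ≤ lam) (hlam1 : lam < 1)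
    (Φ : Matrix (Fin n) (Fin K) ℝ)
    (hΦ : LinearIndependent ℝ (fun k : Fin K => fun i : Fin n => Φ i k))
    (D : Matrix (Fin n) (Fin n) ℝ) (hD : D = Matrix.diagonal pi)
    (M : Matrix (Fin n) (Fin n) ℝ)
    (hM : M = (1 - lam) • ∑' m : ℕ, (lam ^ m * α ^ (m + 1)) • P ^ (m + 1))
    (A : Matrix (Fin K) (Fin K) ℝ) (hA : A = Φᵀ * D * (M - 1) * Φ)
    (b : (Fin n → ℝ) → (Fin K → ℝ))
    (hb : ∀ c, b c = (Φᵀ * D * ∑' m : ℕ, (α * lam) ^ m • P ^ m).mulVec c)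
    (gbar gt η : Fin n → ℝ) (hη : η = gt - gbar)
    (rstar rtstar : Fin K → ℝ)
    (hrstar : A.mulVec rstar + b gbar = 0)
    (hrtstar : A.mulVec rtstar + b gt = 0) :
    normD pi (Φ.mulVec rtstar - Φ.mulVec rstar) ≤ (1 / (1 - α)) * normD pi η :=
  TD_limit_robustness_general P hP0 hP1 pi hpi0 hstat α lam hα0 hα1 hlam0 hlam1 Φ D hD M hM A hA b
    hb gbar gt η hη rstar rtstar hrstar hrtstar
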